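/- arXiv:2104.12216 — 5 statements merged into one kernel-verified Lean document; each statement's English description precedes it below -/
import Mathlib

section
/- For positive reals μ, μ' and t ∈ [0,1), the regularized incomplete beta function has the hypergeometric series representation I(μ,μ';t) = (t^μ/(μ B(μ,μ'))) · Σ_{k=0}^∞ (1−μ')_k (μ)_k / ((μ+1)_k k!) · t^k, and this series also converges and the identity holds at t = 1. -/
open MeasureTheory

/-- The beta function `B(a,b) = ∫₀¹ s^(a-1) (1-s)^(b-1) ds`. -/
noncomputable def betaFn (a b : ℝ) : ℝ := ∫ s in (0:ℝ)..1, s ^ (a - 1) * (1 - s) ^ (b - 1)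

/-- The regularized incomplete beta function `I(a,b;t)`. -/
noncomputable def regIncBeta (a b t : ℝ) : ℝ :=
  (betaFn a b)⁻¹ * ∫ s in (0:ℝ)..t, s ^ (a - 1) * (1 - s) ^ (b - 1)

/-- `ℬ(λ,λ',μ,μ',ν,ν') = (1/B(λ,λ')) ∫₀¹ t^(λ-1)(1-t)^(λ'-1) I(μ,μ';t) I(ν,ν';t) dt`. -/
noncomputable def calB (l l' m m' n n' : ℝ) : ℝ :=
  (betaFn l l')⁻¹ * ∫ t in (0:ℝ)..1,
    t ^ (l - 1) * (1 - t) ^ (l' - 1) * regIncBeta m m' t * regIncBeta n n' t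

/-- The Pochhammer symbol (rising factorial) `(a)_k = a(a+1)⋯(a+k-1)`. -/
noncomputable def poch (a : ℝ) (k : ℕ) : ℝ := ∏ i ∈ Finset.range k, (a + i)

/-- The hypergeometric value `₃F₂(a₁,a₂,a₃; b₁,b₂; 1)`. -/
noncomputable def F32 (a1 a2 a3 b1 b2 : ℝ) : ℝ :=
  ∑' k : ℕ, poch a1 k * poch a2 k * poch a3 k / (poch b1 k * poch b2 k * (Nat.factorial k))

/-!
Expand `(1 - s) ^ (μ' - 1) = ∑ (1 - μ')_k s ^ k / k!` by the binomial series and integrate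
`s ^ (μ - 1)` times it term by term over `[0, t]`; the identity `(μ)_k / (μ + 1)_k = μ / (μ + k)`
turns the result into the stated series. The interchange of sum and integral is justified by
`∑ |(1 - μ')_k / k!| / (μ + k) < ∞`, which holds because `1 - μ' < 1` and also gives convergence
at `t = 1`.
-/

open Filter Set MeasureTheory

lemma poch_succ (a : ℝ) (k : ℕ) : poch a (k + 1) = poch a k * (a + k) :=
  Finset.prod_range_succ _ _

lemma poch_pos {a : ℝ} (ha : 0 < a) (k : ℕ) : 0 < poch a k :=
  Finset.prod_pos fun i _ => by positivity

lemma poch_mul_add (a : ℝ) (k : ℕ) : poch a k * (a + k) = a * poch (a + 1) k := by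
  induction k with
  | zero => simp [poch]
  | succ k ih =>
    rw [poch_succ, poch_succ]
    push_cast
    linear_combination (a + k + 1) * ih

lemma poch_eq_ascPochhammer_eval (a : ℝ) (k : ℕ) : poch a k = (ascPochhammer ℝ k).eval a := by
  induction k with
  | zero => simp [poch]
  | succ k ih => rw [ascPochhammer_succ_eval, ← ih, poch_succ]

lemma ringChoose_add_sub_one (a : ℝ) (k : ℕ) :
    Ring.choose (a + k - 1) k = poch a k / k.factorial := by
  rw [Ring.choose_eq_smul, Polynomial.descPochhammer_smeval_eq_ascPochhammer,
    Polynomial.ascPochhammer_smeval_eq_eval, poch_eq_ascPochhammer_eval, smul_eq_mul,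
    div_eq_inv_mul]
  ring_nf

lemma poch_div_factorial_succ (a : ℝ) (k : ℕ) :
    poch a (k + 1) / (k + 1).factorial * (k + 1) = poch a k / k.factorial * (a + k) := by
  rw [poch_succ, Nat.factorial_succ]
  push_cast
  field_simp

lemma hasSum_poch_div_factorial_mul_pow (a : ℝ) {x : ℝ} (hx : |x| < 1) :
    HasSum (fun k => poch a k / k.factorial * x ^ k) ((1 - x) ^ (-a)) := by
  have h := (Real.one_div_one_sub_rpow_hasFPowerSeriesOnBall_zero a).hasSum
    (y := x) (by simpa [enorm_eq_nnnorm, ← NNReal.coe_lt_coe] using hx)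
  simp only [FormalMultilinearSeries.ofScalars_apply_eq, smul_eq_mul, zero_add,
    ringChoose_add_sub_one] at h
  rwa [Real.rpow_neg (by linarith [le_abs_self x]), ← one_div]

lemma summable_sub_succ_of_antitone {d : ℕ → ℝ} (hd : Antitone d) (hd0 : ∀ k, 0 ≤ d k) :
    Summable fun k => d k - d (k + 1) :=
  summable_of_sum_range_le (fun k => sub_nonneg.2 (hd k.le_succ)) fun n => by
    rw [Finset.sum_range_sub']
    linarith [hd0 n]

/-- Once `a + k ≥ 0`, the moduli `|(a)_k / k!|` decrease, and `(1 - a) |(a)_k / k!| / (k + 1)`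
is exactly their decrement. -/
lemma summable_abs_poch_div_factorial_div_succ {a : ℝ} (ha : a < 1) :
    Summable fun k : ℕ => |poch a k / k.factorial| / (k + 1) := by
  set N := ⌈-a⌉₊
  set d : ℕ → ℝ := fun k => |poch a (k + N) / (k + N).factorial|
  have hN : ∀ k : ℕ, 0 ≤ a + (k + N : ℕ) := fun k => by
    have := Nat.le_ceil (-a); push_cast; linarith [k.cast_nonneg (α := ℝ)]
  have hrec : ∀ k, d (k + 1) * ((k + N : ℕ) + 1) = d k * (a + (k + N : ℕ)) := fun k => by
    have h := congrArg abs (poch_div_factorial_succ a (k + N))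
    rwa [abs_mul, abs_mul, abs_of_nonneg (hN k),
      abs_of_pos (by positivity : (0 : ℝ) < (k + N : ℕ) + 1), Nat.add_right_comm] at h
  have hdecr : ∀ k, (1 - a) * (d k / ((k + N : ℕ) + 1)) = d k - d (k + 1) := fun k => by
    have hk : ((k + N : ℕ) : ℝ) + 1 ≠ 0 := by positivity
    field_simp
    linear_combination hrec k
  have hanti : Antitone d := antitone_nat_of_succ_le fun k => by
    have : 0 ≤ (1 - a) * (d k / ((k + N : ℕ) + 1)) :=
      mul_nonneg (by linarith) (div_nonneg (abs_nonneg _) (by positivity))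
    linarith [hdecr k]
  have h := (summable_sub_succ_of_antitone hanti fun _ => abs_nonneg _).div_const (1 - a)
  refine (summable_nat_add_iff N).1 (h.congr fun k => ?_)
  rw [← hdecr k, mul_div_cancel_left₀ _ (by linarith)]

lemma summable_abs_poch_div_factorial_div_add {a m : ℝ} (ha : a < 1) (hm : 0 < m) :
    Summable fun k : ℕ => |poch a k / k.factorial| / (m + k) := by
  refine ((summable_abs_poch_div_factorial_div_succ ha).mul_left (1 + m⁻¹)).of_nonneg_of_le
    (fun k => by positivity) fun k => ?_
  have hk : (k + 1 : ℝ) ≤ (1 + m⁻¹) * (m + k) := by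
    have : (1 + m⁻¹) * (m + k) = k + 1 + m + k / m := by field_simp; ring
    linarith [div_nonneg k.cast_nonneg hm.le]
  rw [mul_div_assoc', div_le_div_iff₀ (by positivity) (by positivity), mul_comm (1 + m⁻¹),
    mul_assoc]
  exact mul_le_mul_of_nonneg_left hk (abs_nonneg _)

lemma integral_rpow_sub_one_add_nat {m t : ℝ} (hm : 0 < m) (ht : 0 ≤ t) (k : ℕ) :
    ∫ s in (0 : ℝ)..t, s ^ (m - 1 + k) = t ^ m * t ^ k / (m + k) := by
  have hmk : m + k ≠ 0 := by positivity
  rw [integral_rpow (Or.inl (by linarith [k.cast_nonneg (α := ℝ)])),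
    show m - 1 + k + 1 = m + k by ring, Real.zero_rpow hmk, sub_zero, Real.rpow_add' ht hmk,
    Real.rpow_natCast]

lemma hasSum_integral_rpow_mul_of_hasSum {c : ℕ → ℝ} {g : ℝ → ℝ} {m t : ℝ} (hm : 0 < m)
    (ht0 : 0 ≤ t) (ht1 : t ≤ 1) (hc : Summable fun k : ℕ => |c k| / (m + k))
    (hg : ∀ s ∈ Ioo (0 : ℝ) 1, HasSum (fun k => c k * s ^ k) (g s)) :
    HasSum (fun k => c k * (t ^ m * t ^ k / (m + k))) (∫ s in (0 : ℝ)..t, s ^ (m - 1) * g s) := by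
  set F : ℕ → ℝ → ℝ := fun k s => c k * s ^ (m - 1 + k)
  have hF_int : ∀ k, IntegrableOn (F k) (Ioc 0 t) := fun k =>
    (intervalIntegrable_iff_integrableOn_Ioc_of_le ht0).1
      ((intervalIntegral.intervalIntegrable_rpow'
        (by linarith [k.cast_nonneg (α := ℝ)])).const_mul (c k))
  have hF_eq : ∀ k, ∫ s in Ioc 0 t, F k s = c k * (t ^ m * t ^ k / (m + k)) := fun k => by
    rw [← intervalIntegral.integral_of_le ht0, intervalIntegral.integral_const_mul,
      integral_rpow_sub_one_add_nat hm ht0]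
  have hF_norm : ∀ k, ∫ s in Ioc 0 t, ‖F k s‖ = |c k| * (t ^ m * t ^ k / (m + k)) := fun k => by
    rw [← intervalIntegral.integral_of_le ht0, ← integral_rpow_sub_one_add_nat hm ht0,
      ← intervalIntegral.integral_const_mul]
    refine intervalIntegral.integral_congr fun s hs => ?_
    rw [uIcc_of_le ht0] at hs
    simp [F, abs_of_nonneg (Real.rpow_nonneg hs.1 _)]
  have hF_sum : Summable fun k => ∫ s in Ioc 0 t, ‖F k s‖ := by
    refine hc.of_nonneg_of_le (fun k => integral_nonneg fun _ => norm_nonneg _) fun k => ?_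
    have : t ^ m * t ^ k ≤ 1 :=
      mul_le_one₀ (Real.rpow_le_one ht0 ht1 hm.le) (by positivity) (pow_le_one₀ ht0 ht1)
    rw [hF_norm, ← mul_div_assoc]
    gcongr
    exact mul_le_of_le_one_right (abs_nonneg _) this
  have hF_tsum : ∀ s ∈ Ioo 0 t, ∑' k, F k s = s ^ (m - 1) * g s := fun s hs => by
    have hterm : ∀ k : ℕ, F k s = s ^ (m - 1) * (c k * s ^ k) := fun k => by
      simp only [F, Real.rpow_add hs.1, Real.rpow_natCast]
      ring
    rw [tsum_congr hterm, ((hg s ⟨hs.1, hs.2.trans_le ht1⟩).mul_left _).tsum_eq]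
  have h := (hasSum_integral_of_summable_integral_norm hF_int hF_sum).congr_fun fun k =>
    (hF_eq k).symm
  rwa [integral_Ioc_eq_integral_Ioo, setIntegral_congr_fun measurableSet_Ioo hF_tsum,
    ← integral_Ioc_eq_integral_Ioo, ← intervalIntegral.integral_of_le ht0] at h

/-- the hypergeometric series representation
`I(μ,μ';t) = (t^μ/(μ B(μ,μ'))) ₂F₁(1−μ', μ; μ+1; t)` for all `t ∈ [0,1]`
(convergence included at `t = 1`). -/
theorem stmt3 (m m' : ℝ) (hm : 0 < m) (hm' : 0 < m') :
    ∀ t ∈ Set.Icc (0:ℝ) 1,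
      HasSum
        (fun k : ℕ => t ^ m / (m * betaFn m m') *
          (poch (1 - m') k * poch m k / (poch (m + 1) k * (Nat.factorial k)) * t ^ k))
        (regIncBeta m m' t) := by
  intro t ht
  have hbinom : ∀ s ∈ Ioo (0 : ℝ) 1,
      HasSum (fun k => poch (1 - m') k / k.factorial * s ^ k) ((1 - s) ^ (m' - 1)) :=
    fun s hs => by
      simpa only [neg_sub] using
        hasSum_poch_div_factorial_mul_pow (1 - m') (abs_lt.2 ⟨by linarith [hs.1], hs.2⟩)
  have hsum := (hasSum_integral_rpow_mul_of_hasSum hm ht.1 ht.2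
    (summable_abs_poch_div_factorial_div_add (by linarith) hm) hbinom).mul_left (betaFn m m')⁻¹
  refine hsum.congr_fun fun k => ?_
  have hk : m + k ≠ 0 := by positivity
  have hpoch : poch m k = m * poch (m + 1) k / (m + k) := by
    rw [eq_div_iff hk, poch_mul_add]
  have hpoch_ne : poch (m + 1) k ≠ 0 := (poch_pos (by linarith) k).ne'
  rw [hpoch]
  field_simp
end

section
/- For all positive reals μ and ν, ∫₀¹ I(μ,μ;t) I(ν,ν;t) dt = 1/2 − (μ+ν) B(μ+ν, μ+ν+1) / (4 μ ν B(μ,μ+1) B(ν,ν+1)). -/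
/-!
Write `I_a = I(a,a;·)`, `B_a = B(a,a)` and `q(t) = t(1-t)`, so that `I_a' = q^(a-1) / B_a` and
`(t - 1/2) I_a' = -(q^a)' / (2 a B_a)`. Integrating `I_m I_n = (t - 1/2)' I_m I_n` by parts twice
yields the explicit primitive
`Φ = (t - 1/2) I_m I_n + q^m I_n / (2 m B_m) + q^n I_m / (2 n B_n)`
of `I_m I_n + (m + n) q^(m+n-1) / (2 m n B_m B_n)`. Since `Φ(0) = 0`, `Φ(1) = 1/2` and
`∫₀¹ q^(m+n-1) = B_(m+n)`, it remains to use `B(a, a+1) = B(a, a) / 2`, which follows from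
`B(a, b) = B(a, b+1) + B(a+1, b)` and the symmetry of `B`.
-/

open MeasureTheory

open intervalIntegral Set

section Beta

variable {a b t : ℝ}

lemma intervalIntegrable_betaIntegrand_zero_half (ha : 0 < a) (b : ℝ) :
    IntervalIntegrable (fun s : ℝ => s ^ (a - 1) * (1 - s) ^ (b - 1)) volume 0 (1 / 2) := by
  refine (intervalIntegrable_rpow' (by linarith)).mul_continuousOn ?_
  rw [uIcc_of_le (by norm_num)]
  exact ContinuousOn.rpow_const (by fun_prop) fun s hs => Or.inl (by linarith [hs.2])

lemma intervalIntegrable_betaIntegrand (ha : 0 < a) (hb : 0 < b) :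
    IntervalIntegrable (fun s : ℝ => s ^ (a - 1) * (1 - s) ^ (b - 1)) volume 0 1 := by
  refine (intervalIntegrable_betaIntegrand_zero_half ha b).trans ?_
  have h := ((intervalIntegrable_betaIntegrand_zero_half hb a).comp_sub_left 1).symm
  norm_num at h
  simpa only [mul_comm] using h

lemma betaFn_pos (ha : 0 < a) (hb : 0 < b) : 0 < betaFn a b :=
  intervalIntegral_pos_of_pos_on (intervalIntegrable_betaIntegrand ha hb)
    (fun s hs => mul_pos (Real.rpow_pos_of_pos hs.1 _)
      (Real.rpow_pos_of_pos (by linarith [hs.2]) _))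
    one_pos

lemma betaFn_comm (a b : ℝ) : betaFn a b = betaFn b a := by
  have h := integral_comp_sub_left (a := 0) (b := 1)
    (fun s : ℝ => s ^ (b - 1) * (1 - s) ^ (a - 1)) 1
  norm_num at h
  rw [betaFn, betaFn, ← h]
  simp only [mul_comm]

lemma betaFn_add_one_add_betaFn_add_one (ha : 0 < a) (hb : 0 < b) :
    betaFn a (b + 1) + betaFn (a + 1) b = betaFn a b := by
  rw [betaFn, betaFn, betaFn, ← intervalIntegral.integral_add]
  · refine integral_congr_ae ?_
    filter_upwards [volume.ae_ne 1] with s hs1 hs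
    rw [uIoc_of_le zero_le_one] at hs
    have hs0 : s ≠ 0 := hs.1.ne'
    have hs1' : 1 - s ≠ 0 := sub_ne_zero.2 hs1.symm
    simp only [add_sub_cancel_right, Real.rpow_sub_one hs0, Real.rpow_sub_one hs1']
    field_simp
    ring
  · simpa using intervalIntegrable_betaIntegrand ha (by linarith : 0 < b + 1)
  · simpa using intervalIntegrable_betaIntegrand (by linarith : 0 < a + 1) hb

lemma betaFn_self_add_one (ha : 0 < a) : betaFn a (a + 1) = betaFn a a / 2 := by
  have h := betaFn_add_one_add_betaFn_add_one ha ha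
  rw [betaFn_comm (a + 1)] at h
  linarith

lemma rpow_mul_one_sub_eq (ht : t ∈ Icc (0 : ℝ) 1) (c : ℝ) :
    (t * (1 - t)) ^ c = t ^ c * (1 - t) ^ c :=
  Real.mul_rpow ht.1 (by linarith [ht.2])

lemma betaFn_self_eq_integral (a : ℝ) :
    betaFn a a = ∫ t in (0 : ℝ)..1, (t * (1 - t)) ^ (a - 1) :=
  integral_congr fun t ht => (rpow_mul_one_sub_eq (by rwa [uIcc_of_le zero_le_one] at ht) _).symm

lemma intervalIntegrable_rpow_mul_one_sub (ha : 0 < a) :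
    IntervalIntegrable (fun t : ℝ => (t * (1 - t)) ^ (a - 1)) volume 0 1 := by
  refine (intervalIntegrable_betaIntegrand ha ha).congr fun t ht => ?_
  rw [uIoc_of_le zero_le_one] at ht
  exact (rpow_mul_one_sub_eq (Ioc_subset_Icc_self ht) _).symm

lemma hasDerivAt_rpow_mul_one_sub (c : ℝ) (ht : t ∈ Ioo (0 : ℝ) 1) :
    HasDerivAt (fun t : ℝ => (t * (1 - t)) ^ c)
      (c * (t * (1 - t)) ^ (c - 1) * (1 - 2 * t)) t := by
  have hq : HasDerivAt (fun t : ℝ => t * (1 - t)) (1 - 2 * t) t :=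
    ((hasDerivAt_id' t).mul ((hasDerivAt_const t 1).sub (hasDerivAt_id' t))).congr_deriv
      (by simp only [Pi.sub_apply]; ring)
  convert hq.rpow_const (p := c) (Or.inl (by nlinarith [ht.1, ht.2])) using 1
  ring

end Beta

section RegIncBeta

variable {a b t : ℝ}

lemma regIncBeta_zero (a b : ℝ) : regIncBeta a b 0 = 0 := by
  simp [regIncBeta]

lemma regIncBeta_one (ha : 0 < a) (hb : 0 < b) : regIncBeta a b 1 = 1 :=
  inv_mul_cancel₀ (betaFn_pos ha hb).ne'

lemma continuousOn_regIncBeta (ha : 0 < a) (hb : 0 < b) :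
    ContinuousOn (regIncBeta a b) (Icc 0 1) := by
  refine continuousOn_const.mul ?_
  simpa [uIcc_of_le zero_le_one] using
    continuousOn_primitive_interval' (intervalIntegrable_betaIntegrand ha hb)
      (left_mem_uIcc (a := (0 : ℝ)) (b := 1))

lemma hasDerivAt_regIncBeta (ha : 0 < a) (hb : 0 < b) (ht : t ∈ Ioo (0 : ℝ) 1) :
    HasDerivAt (regIncBeta a b) ((betaFn a b)⁻¹ * (t ^ (a - 1) * (1 - t) ^ (b - 1))) t := by
  have hcont : ContinuousOn (fun s : ℝ => s ^ (a - 1) * (1 - s) ^ (b - 1)) (Ioo 0 1) :=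
    ContinuousOn.mul (continuousOn_id.rpow_const fun s hs => Or.inl hs.1.ne')
      (ContinuousOn.rpow_const (by fun_prop) fun s hs => Or.inl (by linarith [hs.2]))
  refine (integral_hasDerivAt_right ?_ ?_ ?_).const_mul _
  · refine (intervalIntegrable_betaIntegrand ha hb).mono_set ?_
    rw [uIcc_of_le zero_le_one, uIcc_of_le ht.1.le]
    exact Icc_subset_Icc le_rfl ht.2.le
  · exact hcont.stronglyMeasurableAtFilter isOpen_Ioo t ht
  · exact hcont.continuousAt (isOpen_Ioo.mem_nhds ht)

lemma hasDerivAt_regIncBeta_self (ha : 0 < a) (ht : t ∈ Ioo (0 : ℝ) 1) :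
    HasDerivAt (regIncBeta a a) ((betaFn a a)⁻¹ * (t * (1 - t)) ^ (a - 1)) t := by
  rw [rpow_mul_one_sub_eq (Ioo_subset_Icc_self ht)]
  exact hasDerivAt_regIncBeta ha ha ht

end RegIncBeta

section Primitive

variable {m n : ℝ}

noncomputable def regIncBetaMulPrimitive (m n t : ℝ) : ℝ :=
  (t - 1 / 2) * regIncBeta m m t * regIncBeta n n t
    + (t * (1 - t)) ^ m * regIncBeta n n t / (2 * m * betaFn m m)
    + (t * (1 - t)) ^ n * regIncBeta m m t / (2 * n * betaFn n n)

lemma regIncBetaMulPrimitive_zero (m n : ℝ) : regIncBetaMulPrimitive m n 0 = 0 := by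
  simp [regIncBetaMulPrimitive, regIncBeta_zero]

lemma regIncBetaMulPrimitive_one (hm : 0 < m) (hn : 0 < n) :
    regIncBetaMulPrimitive m n 1 = 1 / 2 := by
  norm_num [regIncBetaMulPrimitive, regIncBeta_one hm hm, regIncBeta_one hn hn,
    Real.zero_rpow hm.ne', Real.zero_rpow hn.ne']

lemma continuousOn_regIncBetaMulPrimitive (hm : 0 < m) (hn : 0 < n) :
    ContinuousOn (regIncBetaMulPrimitive m n) (Icc 0 1) := by
  have hIm := continuousOn_regIncBeta hm hm
  have hIn := continuousOn_regIncBeta hn hn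
  have hq : ∀ c : ℝ, 0 < c → ContinuousOn (fun t : ℝ => (t * (1 - t)) ^ c) (Icc 0 1) :=
    fun c hc => ContinuousOn.rpow_const (by fun_prop) fun _ _ => Or.inr hc.le
  unfold regIncBetaMulPrimitive
  exact ((((continuousOn_id.sub continuousOn_const).mul hIm).mul hIn).add
    (((hq m hm).mul hIn).div_const _)).add (((hq n hn).mul hIm).div_const _)

lemma hasDerivAt_regIncBetaMulPrimitive (hm : 0 < m) (hn : 0 < n) {t : ℝ}
    (ht : t ∈ Ioo (0 : ℝ) 1) :
    HasDerivAt (regIncBetaMulPrimitive m n)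
      (regIncBeta m m t * regIncBeta n n t
        + (m + n) / (2 * m * n * betaFn m m * betaFn n n) * (t * (1 - t)) ^ (m + n - 1)) t := by
  have hIm := hasDerivAt_regIncBeta_self hm ht
  have hIn := hasDerivAt_regIncBeta_self hn ht
  have hq : 0 < t * (1 - t) := mul_pos ht.1 (by linarith [ht.2])
  have hBm := (betaFn_pos hm hm).ne'
  have hBn := (betaFn_pos hn hn).ne'
  refine (((((hasDerivAt_id' t).sub_const (1 / 2)).mul hIm).mul hIn).add
    (((hasDerivAt_rpow_mul_one_sub m ht).mul hIn).div_const _)).add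
    (((hasDerivAt_rpow_mul_one_sub n ht).mul hIm).div_const _) |>.congr_deriv ?_
  simp only [Pi.mul_apply]
  rw [Real.rpow_sub_one hq.ne', Real.rpow_sub_one hq.ne', Real.rpow_sub_one hq.ne',
    Real.rpow_add hq]
  field_simp
  ring

lemma integral_regIncBeta_mul_regIncBeta (hm : 0 < m) (hn : 0 < n) :
    ∫ t in (0 : ℝ)..1, regIncBeta m m t * regIncBeta n n t =
      1 / 2 - (m + n) * betaFn (m + n) (m + n) / (2 * m * n * betaFn m m * betaFn n n) := by
  have hmn : 0 < m + n := add_pos hm hn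
  have hprod : IntervalIntegrable (fun t => regIncBeta m m t * regIncBeta n n t) volume 0 1 :=
    ((continuousOn_regIncBeta hm hm).mul (continuousOn_regIncBeta hn hn)).intervalIntegrable_of_Icc
      zero_le_one
  have hftc := integral_eq_sub_of_hasDerivAt_of_le zero_le_one
    (continuousOn_regIncBetaMulPrimitive hm hn)
    (fun t ht => hasDerivAt_regIncBetaMulPrimitive hm hn ht)
    (hprod.add ((intervalIntegrable_rpow_mul_one_sub hmn).const_mul _))
  rw [intervalIntegral.integral_add hprod ((intervalIntegrable_rpow_mul_one_sub hmn).const_mul _),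
    intervalIntegral.integral_const_mul, ← betaFn_self_eq_integral,
    regIncBetaMulPrimitive_one hm hn, regIncBetaMulPrimitive_zero, sub_zero] at hftc
  rw [← hftc]
  ring

end Primitive

/-- inner product of symmetric regularized incomplete beta functions. -/
theorem stmt9 (m n : ℝ) (hm : 0 < m) (hn : 0 < n) :
    ∫ t in (0:ℝ)..1, regIncBeta m m t * regIncBeta n n t =
      1 / 2 - (m + n) * betaFn (m + n) (m + n + 1) /
        (4 * m * n * betaFn m (m + 1) * betaFn n (n + 1)) := by
  rw [integral_regIncBeta_mul_regIncBeta hm hn, betaFn_self_add_one hm, betaFn_self_add_one hn,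
    betaFn_self_add_one (add_pos hm hn)]
  ring
end

section
/- For all positive integers m and n, ∫₀¹ I(m,m;t) I(n,n;t) dt = 1/2 − (1/4) · C(m+n, m)² / C(2m+2n, 2m), where C(·,·) denotes the binomial coefficient. -/
/-!
Write `p = t(1 - t)` and `G_k = I(k + 1, k + 1; ·)`, so that `G_k' = p^k / B(k + 1, k + 1)`.
The identity `(p^(k+1) (2t - 1))' = (4k + 6) p^(k+1) - (k + 1) p^k` gives, integrated over `[0, 1]`,
`B(k + 1, k + 1) = 1 / ((2k + 1) C(2k, k))`, and integrated over `[0, t]`,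
`G_(k+1) = G_k + p^(k+1) (2t - 1) / ((k + 1) B(k + 1, k + 1))`. The correction term has an
antiderivative proportional to `p^(k+2)`, so integrating it against `G_l` by parts leaves a ratio of
beta values. The closed form `1/2 - c_(k+1) c_(l+1) / (4 c_(k+l+2))`, with `c` the central binomial
coefficients, obeys the same recursion; both sides are symmetric in `k, l` and equal `1/3` at
`k = l = 0`. Finally `C(m + n, m)² / C(2m + 2n, 2m) = c_m c_n / c_(m+n)`.
-/

open MeasureTheory

open Nat

-- Symmetry turns the recursion in the first index into one in the second.
lemma eq_of_symm_of_succ_left {α : Type*} [Add α] {S R D : ℕ → ℕ → α}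
    (hS : ∀ k l, S k l = S l k) (hR : ∀ k l, R k l = R l k)
    (hS_succ : ∀ k l, S (k + 1) l = S k l + D k l)
    (hR_succ : ∀ k l, R (k + 1) l = R k l + D k l)
    (h₀ : S 0 0 = R 0 0) (k l : ℕ) : S k l = R k l := by
  have hzero : ∀ l, S 0 l = R 0 l := by
    intro l
    induction l with
    | zero => exact h₀
    | succ l ih => rw [hS, hR, hS_succ, hR_succ, hS, hR, ih]
  induction k with
  | zero => exact hzero l
  | succ k ih => rw [hS_succ, hR_succ, ih]

lemma hasDerivAt_mul_one_sub_pow_succ (k : ℕ) (t : ℝ) :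
    HasDerivAt (fun t : ℝ => (t * (1 - t)) ^ (k + 1))
      ((k + 1) * (t * (1 - t)) ^ k * (1 - 2 * t)) t := by
  have h := ((hasDerivAt_id' t).fun_mul ((hasDerivAt_id' t).const_sub 1)).fun_pow (k + 1)
  refine h.congr_deriv ?_
  push_cast
  ring

-- Uses `(1 - 2t)² = 1 - 4t(1 - t)`.
lemma hasDerivAt_mul_one_sub_pow_succ_mul_two_mul_sub_one (k : ℕ) (t : ℝ) :
    HasDerivAt (fun t : ℝ => (t * (1 - t)) ^ (k + 1) * (2 * t - 1))
      ((4 * k + 6) * (t * (1 - t)) ^ (k + 1) - (k + 1) * (t * (1 - t)) ^ k) t := by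
  refine ((hasDerivAt_mul_one_sub_pow_succ k t).fun_mul
    (((hasDerivAt_id' t).const_mul 2).sub_const 1)).congr_deriv ?_
  ring

lemma four_mul_add_six_mul_integral_pow_succ_sub (k : ℕ) (t : ℝ) :
    (4 * k + 6) * (∫ s in (0:ℝ)..t, (s * (1 - s)) ^ (k + 1))
      - (k + 1) * ∫ s in (0:ℝ)..t, (s * (1 - s)) ^ k
      = (t * (1 - t)) ^ (k + 1) * (2 * t - 1) := by
  rw [← intervalIntegral.integral_const_mul, ← intervalIntegral.integral_const_mul,
    ← intervalIntegral.integral_sub (Continuous.intervalIntegrable (by fun_prop) _ _)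
      (Continuous.intervalIntegrable (by fun_prop) _ _),
    intervalIntegral.integral_eq_sub_of_hasDerivAt
      (fun s _ => hasDerivAt_mul_one_sub_pow_succ_mul_two_mul_sub_one k s)
      (Continuous.intervalIntegrable (by fun_prop) _ _)]
  simp

/-- `betaSym k = B(k + 1, k + 1)`. -/
noncomputable def betaSym (k : ℕ) : ℝ := ∫ s in (0:ℝ)..1, (s * (1 - s)) ^ k

/-- `incBetaSym k t = I(k + 1, k + 1; t)`. -/
noncomputable def incBetaSym (k : ℕ) (t : ℝ) : ℝ :=
  (betaSym k)⁻¹ * ∫ s in (0:ℝ)..t, (s * (1 - s)) ^ k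

lemma betaSym_succ (k : ℕ) : (4 * k + 6) * betaSym (k + 1) = (k + 1) * betaSym k := by
  have h := four_mul_add_six_mul_integral_pow_succ_sub k 1
  rw [sub_self, mul_zero, zero_pow k.succ_ne_zero, zero_mul, sub_eq_zero] at h
  exact h

lemma centralBinom_succ_eq (k : ℕ) :
    (centralBinom (k + 1) : ℝ) = 2 * (2 * k + 1) * centralBinom k / (k + 1) := by
  rw [eq_div_iff (by positivity), mul_comm]
  exact_mod_cast succ_mul_centralBinom_succ k

lemma betaSym_eq (k : ℕ) : betaSym k = ((2 * k + 1) * (centralBinom k : ℝ))⁻¹ := by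
  induction k with
  | zero => simp [betaSym]
  | succ k ih =>
    have hk : (centralBinom k : ℝ) ≠ 0 := Nat.cast_ne_zero.mpr (centralBinom_pos k).ne'
    have h := betaSym_succ k
    rw [ih] at h
    rw [centralBinom_succ_eq]
    field_simp at h ⊢
    push_cast
    linear_combination h

lemma betaSym_pos (k : ℕ) : 0 < betaSym k := by
  rw [betaSym_eq]
  have := centralBinom_pos k
  positivity

lemma integral_mul_one_sub_pow_eq (k : ℕ) (t : ℝ) :
    ∫ s in (0:ℝ)..t, (s * (1 - s)) ^ k = betaSym k * incBetaSym k t := by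
  rw [incBetaSym, mul_inv_cancel_left₀ (betaSym_pos k).ne']

lemma incBetaSym_zero_left (t : ℝ) : incBetaSym 0 t = t := by
  simp [incBetaSym, betaSym]

lemma incBetaSym_zero_right (k : ℕ) : incBetaSym k 0 = 0 := by
  simp [incBetaSym]

lemma incBetaSym_one (k : ℕ) : incBetaSym k 1 = 1 :=
  inv_mul_cancel₀ (betaSym_pos k).ne'

lemma hasDerivAt_incBetaSym (k : ℕ) (t : ℝ) :
    HasDerivAt (incBetaSym k) ((betaSym k)⁻¹ * (t * (1 - t)) ^ k) t :=
  ((Continuous.integral_hasStrictDerivAt (by fun_prop) 0 t).hasDerivAt).const_mul _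

@[fun_prop]
lemma continuous_incBetaSym (k : ℕ) : Continuous (incBetaSym k) :=
  continuous_iff_continuousAt.2 fun t => (hasDerivAt_incBetaSym k t).continuousAt

lemma incBetaSym_succ (k : ℕ) (t : ℝ) :
    incBetaSym (k + 1) t
      = incBetaSym k t + (t * (1 - t)) ^ (k + 1) * (2 * t - 1) / ((k + 1) * betaSym k) := by
  have h := four_mul_add_six_mul_integral_pow_succ_sub k t
  rw [integral_mul_one_sub_pow_eq, integral_mul_one_sub_pow_eq, ← mul_assoc, betaSym_succ] at h
  have := (betaSym_pos k).ne'
  rw [← h]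
  field_simp
  ring

-- Integration by parts; the boundary term at `0` vanishes because `I(n + 1, n + 1; 0) = 0`.
lemma integral_mul_incBetaSym (n : ℕ) {f F : ℝ → ℝ} (hF : ∀ t, HasDerivAt F (f t) t)
    (hf : Continuous f) :
    ∫ t in (0:ℝ)..1, f t * incBetaSym n t
      = F 1 - (betaSym n)⁻¹ * ∫ t in (0:ℝ)..1, F t * (t * (1 - t)) ^ n := by
  have hparts := intervalIntegral.integral_mul_deriv_eq_deriv_mul
    (fun t _ => hasDerivAt_incBetaSym n t) (fun t _ => hF t)
    (Continuous.intervalIntegrable (by fun_prop) 0 1) (hf.intervalIntegrable 0 1)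
  simp only [incBetaSym_one, incBetaSym_zero_right] at hparts
  rw [← intervalIntegral.integral_const_mul]
  simp_rw [mul_comm (f _), hparts, one_mul, zero_mul, sub_zero]
  congr 2 with t
  ring

lemma integral_incBetaSym_succ_mul (k l : ℕ) :
    ∫ t in (0:ℝ)..1, incBetaSym (k + 1) t * incBetaSym l t
      = (∫ t in (0:ℝ)..1, incBetaSym k t * incBetaSym l t)
        + betaSym (k + l + 2) / ((k + 1) * (k + 2) * betaSym k * betaSym l) := by
  set c : ℝ := (k + 1) * (k + 2) * betaSym k
  have hc : c ≠ 0 := by have := betaSym_pos k; positivity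
  have hF : ∀ t, HasDerivAt (fun t : ℝ => -(t * (1 - t)) ^ (k + 2) / c)
      ((t * (1 - t)) ^ (k + 1) * (2 * t - 1) / ((k + 1) * betaSym k)) t := by
    intro t
    refine ((hasDerivAt_mul_one_sub_pow_succ (k + 1) t).neg.div_const c).congr_deriv ?_
    have := betaSym_pos k
    field_simp
    push_cast
    ring
  have hsplit : ∀ t, incBetaSym (k + 1) t * incBetaSym l t = incBetaSym k t * incBetaSym l t
      + (t * (1 - t)) ^ (k + 1) * (2 * t - 1) / ((k + 1) * betaSym k) * incBetaSym l t :=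
    fun t => by rw [incBetaSym_succ, add_mul]
  simp_rw [hsplit]
  rw [intervalIntegral.integral_add
      (Continuous.intervalIntegrable (by fun_prop) 0 1)
      (Continuous.intervalIntegrable (by fun_prop) 0 1),
    integral_mul_incBetaSym l hF (by fun_prop)]
  have hint : ∫ t in (0:ℝ)..1, -(t * (1 - t)) ^ (k + 2) / c * (t * (1 - t)) ^ l
      = -(betaSym (k + l + 2) / c) := by
    rw [betaSym, ← intervalIntegral.integral_div, ← intervalIntegral.integral_neg]
    congr 1 with t
    ring
  congr 1
  rw [hint, sub_self, mul_zero, zero_pow (by omega), neg_zero, zero_div, zero_sub, mul_neg,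
    neg_neg, inv_mul_eq_div, div_div, mul_comm c]

lemma one_half_sub_centralBinom_ratio_succ_left (k l : ℕ) :
    (1 / 2 - centralBinom (k + 1 + 1) * centralBinom (l + 1)
        / (4 * centralBinom (k + 1 + l + 2)) : ℝ) =
      1 / 2 - centralBinom (k + 1) * centralBinom (l + 1) / (4 * centralBinom (k + l + 2))
        + betaSym (k + l + 2) / ((k + 1) * (k + 2) * betaSym k * betaSym l) := by
  rw [show k + 1 + l + 2 = k + l + 2 + 1 by omega, betaSym_eq, betaSym_eq, betaSym_eq,
    centralBinom_succ_eq (k + l + 2), centralBinom_succ_eq (k + 1), centralBinom_succ_eq k,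
    centralBinom_succ_eq l]
  have := centralBinom_pos k
  have := centralBinom_pos l
  have := centralBinom_pos (k + l + 2)
  push_cast
  field_simp
  ring

lemma integral_incBetaSym_mul (k l : ℕ) :
    ∫ t in (0:ℝ)..1, incBetaSym k t * incBetaSym l t
      = 1 / 2 - centralBinom (k + 1) * centralBinom (l + 1) / (4 * centralBinom (k + l + 2)) := by
  refine eq_of_symm_of_succ_left
    (S := fun k l => ∫ t in (0:ℝ)..1, incBetaSym k t * incBetaSym l t)
    (R := fun k l =>
      1 / 2 - centralBinom (k + 1) * centralBinom (l + 1) / (4 * centralBinom (k + l + 2)))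
    (fun k l => by simp_rw [mul_comm])
    (fun k l => by rw [add_comm k l, mul_comm (centralBinom _ : ℝ)])
    integral_incBetaSym_succ_mul one_half_sub_centralBinom_ratio_succ_left ?_ k l
  simp_rw [incBetaSym_zero_left, ← sq]
  norm_num [centralBinom, choose, integral_pow]

lemma choose_sq_div_choose_eq_centralBinom (m n : ℕ) :
    ((m + n).choose m : ℝ) ^ 2 / (2 * m + 2 * n).choose (2 * m)
      = centralBinom m * centralBinom n / centralBinom (m + n) := by
  simp only [centralBinom_eq_two_mul_choose]
  rw [Nat.cast_choose ℝ (Nat.le_add_right m n), Nat.cast_choose ℝ (Nat.le_add_right _ (2 * n)),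
    Nat.cast_choose ℝ (by omega : m ≤ 2 * m), Nat.cast_choose ℝ (by omega : n ≤ 2 * n),
    Nat.cast_choose ℝ (by omega : m + n ≤ 2 * (m + n)), Nat.add_sub_cancel_left,
    Nat.add_sub_cancel_left, show 2 * m - m = m by omega, show 2 * n - n = n by omega,
    show 2 * (m + n) - (m + n) = m + n by omega, show 2 * (m + n) = 2 * m + 2 * n by ring]
  field_simp

lemma regIncBeta_natCast_succ (k : ℕ) (t : ℝ) :
    regIncBeta (k + 1 : ℕ) (k + 1 : ℕ) t = incBetaSym k t := by
  have h : ∀ s : ℝ,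
      s ^ ((k + 1 : ℕ) - 1 : ℝ) * (1 - s) ^ ((k + 1 : ℕ) - 1 : ℝ) = (s * (1 - s)) ^ k :=
    fun s => by
      rw [Nat.cast_succ, add_sub_cancel_right, Real.rpow_natCast, Real.rpow_natCast, mul_pow]
  simp only [regIncBeta, betaFn, h]
  rfl

/-- `∫₀¹ I(m,m;t) I(n,n;t) dt = 1/2 − (1/4) C(m+n,m)²/C(2m+2n,2m)`
for positive integers `m, n`. -/
theorem stmt13 (m n : ℕ) (hm : 0 < m) (hn : 0 < n) :
    ∫ t in (0:ℝ)..1, regIncBeta m m t * regIncBeta n n t =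
      1 / 2 - (1 / 4) * ((m + n).choose m : ℝ) ^ 2 /
        ((2 * m + 2 * n).choose (2 * m) : ℝ) := by
  obtain ⟨k, rfl⟩ : ∃ k, m = k + 1 := ⟨m - 1, by omega⟩
  obtain ⟨l, rfl⟩ : ∃ l, n = l + 1 := ⟨n - 1, by omega⟩
  simp_rw [regIncBeta_natCast_succ, integral_incBetaSym_mul, mul_div_assoc,
    choose_sq_div_choose_eq_centralBinom, show k + 1 + (l + 1) = k + l + 2 by ring]
  ring
end

section
/- Let M, N, m, n be integers with 1 ≤ m ≤ M and 1 ≤ n ≤ N. Encode a North/East lattice path from (0,0) to (M,N) as a sequence w of M+N steps, each East or North, with exactly M East steps. For such a path let τ(w) = min{ k : 0 ≤ k ≤ M+N and (number of East steps among the first k steps) ≥ M−m+1 or (number of North steps among the first k steps) ≥ N−n+1 }, the exit time of the path from the rectangle with corners (0,0) and (M−m, N−n). Then Σ_w τ(w), summed over all C(M+N, M) such paths, equals C(M+N, M) · (M+N+1) · ℬ(1, 1, m, M−m+1, n, N−n+1). (Equivalently, the expected exit time of a uniformly random North/East path through (M,N) is (M+N+1)·ℬ(1,1,m,M−m+1,n,N−n+1).)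 -/
/-!
Counting the times `k ≤ M + N` at which the path is still inside the rectangle, `τ(w)` is the
number of lattice points `(a, b) ∈ [0, M - m] × [0, N - n]` visited by `w`; the total over all
paths is therefore `∑ C(a + b, a) · C(M + N - a - b, M - a)`, the number of paths through
`(a, b)` summed over the rectangle.

On the analytic side, `I(m, M - m + 1; t)` is the binomial tail `P(Bin(M, t) ≥ m)`: both vanish
at `0` and have the same derivative, by the derivative formula for Bernstein polynomials. Hence
`ℬ` expands into Beta integrals `∫₀¹ tᵖ (1 - t)^q dt = 1 / ((p + q + 1) C(p + q, p))`, and after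
the substitution `(i, j) = (M - a, N - b)` the two sums agree term by term by the identity
`C(M + N, M) C(M, i) C(N, j) = C(M + N, i + j) C(i + j, i) C(M + N - i - j, M - i)`.
-/

open MeasureTheory

/-- The number of East steps (`true`) among the first `k` steps of the path `w`. -/
def eastCount (T : ℕ) (w : Fin T → Bool) (k : ℕ) : ℕ :=
  (Finset.univ.filter fun i : Fin T => (i : ℕ) < k ∧ w i = true).card

/-- The number of North steps (`false`) among the first `k` steps of the path `w`. -/
def northCount (T : ℕ) (w : Fin T → Bool) (k : ℕ) : ℕ :=
  (Finset.univ.filter fun i : Fin T => (i : ℕ) < k ∧ w i = false).card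

/-- The exit time of the path `w` (of `T` steps) from the rectangle with corners
`(0,0)` and `(Eb−1, Nb−1)`: the least `k ≤ T` at which at least `Eb` East steps or
at least `Nb` North steps have been taken. -/
noncomputable def exitTime (T Eb Nb : ℕ) (w : Fin T → Bool) : ℕ :=
  sInf {k : ℕ | k ≤ T ∧ (Eb ≤ eastCount T w k ∨ Nb ≤ northCount T w k)}

open Finset Polynomial

noncomputable def binomialTail (n k : ℕ) : ℝ[X] := ∑ ν ∈ Icc k n, bernsteinPolynomial ℝ n ν

lemma derivative_binomialTail (n k : ℕ) :
    derivative (binomialTail n (k + 1)) = n * bernsteinPolynomial ℝ (n - 1) k := by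
  rcases n with _ | n
  · simp [binomialTail]
  rcases le_or_gt k n with hk | hk
  · have telescope := sum_Ico_sub (fun ν => bernsteinPolynomial ℝ n ν) (hk.trans n.le_succ)
    rw [bernsteinPolynomial.eq_zero_of_lt ℝ n.lt_succ_self, zero_sub] at telescope
    simp only [binomialTail, ← Ico_add_one_right_eq_Icc, ← sum_Ico_add', map_sum,
      bernsteinPolynomial.derivative_succ, ← mul_sum, Nat.add_sub_cancel]
    rw [← neg_neg (bernsteinPolynomial ℝ n k), ← telescope, ← sum_neg_distrib]
    simp only [neg_sub]
  · simp [binomialTail, bernsteinPolynomial.eq_zero_of_lt ℝ hk,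
      Icc_eq_empty_of_lt (by omega : n + 1 < k + 1)]

lemma eval_binomialTail_zero {n k : ℕ} (hk : 1 ≤ k) : (binomialTail n k).eval 0 = 0 := by
  simp [binomialTail, eval_finsetSum, bernsteinPolynomial.eval_at_0]
  omega

lemma eval_binomialTail_one {n k : ℕ} (hk : k ≤ n) : (binomialTail n k).eval 1 = 1 := by
  simp [binomialTail, eval_finsetSum, bernsteinPolynomial.eval_at_1, hk]

lemma eval_binomialTail (n k : ℕ) (t : ℝ) :
    (binomialTail n k).eval t = ∑ i ∈ Icc k n, (n.choose i : ℝ) * t ^ i * (1 - t) ^ (n - i) := by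
  simp [binomialTail, eval_finsetSum, bernsteinPolynomial]

lemma integral_eval_bernsteinPolynomial (n k : ℕ) (x : ℝ) :
    ∫ t in (0:ℝ)..x, (bernsteinPolynomial ℝ n k).eval t =
      (binomialTail (n + 1) (k + 1)).eval x / (n + 1) := by
  have ftc := intervalIntegral.integral_eq_sub_of_hasDerivAt
    (fun t _ => (binomialTail (n + 1) (k + 1)).hasDerivAt t)
    ((derivative _).continuous.intervalIntegrable 0 x)
  simp only [derivative_binomialTail, eval_mul, eval_natCast, intervalIntegral.integral_const_mul,
    eval_binomialTail_zero le_add_self, sub_zero, Nat.add_sub_cancel] at ftc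
  rw [← ftc]
  field_simp
  push_cast; ring

lemma integral_pow_mul_one_sub_pow (p q : ℕ) (x : ℝ) :
    ∫ t in (0:ℝ)..x, t ^ p * (1 - t) ^ q =
      (binomialTail (p + q + 1) (p + 1)).eval x / ((p + q + 1) * (p + q).choose p) := by
  have := integral_eval_bernsteinPolynomial (p + q) p x
  simp only [bernsteinPolynomial, eval_mul, eval_pow, eval_natCast, eval_X, eval_sub, eval_one,
    Nat.add_sub_cancel_left, mul_assoc, intervalIntegral.integral_const_mul] at this
  have hc : ((p + q).choose p : ℝ) ≠ 0 := by exact_mod_cast (Nat.choose_pos le_self_add).ne'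
  rw [eq_div_iff (by positivity), mul_comm, ← mul_assoc] at this
  rw [← this]; push_cast; field_simp

lemma integral_pow_mul_one_sub_pow_zero_one (p q : ℕ) :
    ∫ t in (0:ℝ)..1, t ^ p * (1 - t) ^ q = (((p + q + 1) * (p + q).choose p : ℕ) : ℝ)⁻¹ := by
  rw [integral_pow_mul_one_sub_pow, eval_binomialTail_one (by omega), one_div]
  push_cast; rfl

lemma rpow_mul_one_sub_rpow_natCast (p q : ℕ) (s : ℝ) :
    s ^ (((p + 1 : ℕ) : ℝ) - 1) * (1 - s) ^ (((p + q + 1 : ℕ) : ℝ) - (p + 1 : ℕ) + 1 - 1) =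
      s ^ p * (1 - s) ^ q := by
  rw [← Real.rpow_natCast s p, ← Real.rpow_natCast (1 - s) q]
  push_cast; ring_nf

lemma regIncBeta_natCast {n k : ℕ} (hk : 1 ≤ k) (hkn : k ≤ n) (x : ℝ) :
    regIncBeta k ((n : ℝ) - k + 1) x = (binomialTail n k).eval x := by
  obtain ⟨p, rfl⟩ := Nat.exists_eq_add_of_le' hk
  obtain ⟨q, rfl⟩ : ∃ q, n = p + q + 1 := ⟨n - (p + 1), by omega⟩
  have hc : ((p + q).choose p : ℝ) ≠ 0 := by exact_mod_cast (Nat.choose_pos le_self_add).ne'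
  simp only [regIncBeta, betaFn, rpow_mul_one_sub_rpow_natCast, integral_pow_mul_one_sub_pow,
    eval_binomialTail_one hkn]
  field_simp

lemma calB_natCast {M N m n : ℕ} (hm : 1 ≤ m) (hmM : m ≤ M) (hn : 1 ≤ n) (hnN : n ≤ N) :
    calB 1 1 m ((M : ℝ) - m + 1) n ((N : ℝ) - n + 1) =
      ∑ i ∈ Icc m M, ∑ j ∈ Icc n N,
        (M.choose i * N.choose j : ℝ) / ((M + N + 1) * (M + N).choose (i + j)) := by
  have integrand (t : ℝ) : t ^ ((1 : ℝ) - 1) * (1 - t) ^ ((1 : ℝ) - 1) *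
      regIncBeta m ((M : ℝ) - m + 1) t * regIncBeta n ((N : ℝ) - n + 1) t =
      ∑ i ∈ Icc m M, ∑ j ∈ Icc n N,
        (M.choose i * N.choose j : ℝ) * (t ^ (i + j) * (1 - t) ^ (M - i + (N - j))) := by
    simp only [sub_self, Real.rpow_zero, one_mul]
    rw [regIncBeta_natCast hm hmM, regIncBeta_natCast hn hnN, eval_binomialTail,
      eval_binomialTail, sum_mul_sum]
    refine sum_congr rfl fun i _ => sum_congr rfl fun j _ => by ring
  have hbeta : betaFn 1 1 = 1 := by simp [betaFn]
  simp only [calB, hbeta, inv_one, one_mul, integrand]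
  rw [intervalIntegral.integral_finsetSum fun i _ =>
    (by fun_prop : Continuous _).intervalIntegrable 0 1]
  refine sum_congr rfl fun i hi => ?_
  rw [intervalIntegral.integral_finsetSum fun j _ =>
    (by fun_prop : Continuous _).intervalIntegrable 0 1]
  refine sum_congr rfl fun j hj => ?_
  rw [mem_Icc] at hi hj
  rw [intervalIntegral.integral_const_mul, integral_pow_mul_one_sub_pow_zero_one,
    show i + j + (M - i + (N - j)) = M + N by omega]
  push_cast
  ring

lemma card_filter_card_eq_card_inter_eq {α : Type*} [Fintype α] [DecidableEq α] (A : Finset α)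
    {M a : ℕ} (ha : a ≤ M) :
    #{S : Finset α | #S = M ∧ #(S ∩ A) = a} = (#A).choose a * (#Aᶜ).choose (M - a) := by
  have split {s t : Finset α} (hs : s ⊆ A) (ht : Disjoint t A) :
      (s ∪ t) ∩ A = s ∧ (s ∪ t) \ A = t := by
    constructor
    · rw [union_inter_distrib_right, inter_eq_left.2 hs, disjoint_iff_inter_eq_empty.1 ht,
        union_empty]
    · rw [union_sdiff_distrib, sdiff_eq_empty_iff_subset.2 hs, empty_union,
        sdiff_eq_self_of_disjoint ht]
  rw [← card_powersetCard, ← card_powersetCard, ← card_product]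
  refine card_nbij' (fun S => (S ∩ A, S \ A)) (fun p => p.1 ∪ p.2) ?_ ?_ ?_ ?_
  · intro S hS
    rw [mem_coe, mem_filter] at hS
    rw [mem_coe, mem_product, mem_powersetCard, mem_powersetCard]
    refine ⟨⟨inter_subset_right, hS.2.2⟩, fun x => by simp +contextual, ?_⟩
    have := card_inter_add_card_sdiff S A
    dsimp only
    omega
  · rintro ⟨s, t⟩ hst
    rw [mem_coe, mem_product, mem_powersetCard, mem_powersetCard,
      subset_compl_iff_disjoint_right] at hst
    obtain ⟨⟨hs, hsa⟩, ht, hta⟩ := hst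
    rw [mem_coe, mem_filter]
    refine ⟨mem_univ _, ?_⟩
    rw [card_union_of_disjoint (disjoint_of_subset_left hs ht.symm), (split hs ht).1]
    omega
  · intro S _
    exact (union_comm _ _).trans (sdiff_union_inter S A)
  · rintro ⟨s, t⟩ hst
    rw [mem_coe, mem_product, mem_powersetCard, mem_powersetCard,
      subset_compl_iff_disjoint_right] at hst
    simp [split hst.1.1 hst.2.1]

lemma card_filter_range_not_eq_sInf {q : ℕ → Prop} [DecidablePred q] (hq : Monotone q) {T : ℕ}
    (hT : q T) : #{k ∈ range (T + 1) | ¬ q k} = sInf {k | k ≤ T ∧ q k} := by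
  obtain ⟨hτT, hτ⟩ : sInf {k | k ≤ T ∧ q k} ∈ {k | k ≤ T ∧ q k} := Nat.sInf_mem ⟨T, le_rfl, hT⟩
  suffices {k ∈ range (T + 1) | ¬ q k} = range (sInf {k | k ≤ T ∧ q k}) by rw [this, card_range]
  ext k
  simp only [mem_filter, mem_range]
  constructor
  · rintro ⟨hkT, hk⟩
    by_contra! hτk
    exact hk (hq hτk hτ)
  · intro hkτ
    refine ⟨by omega, fun hk => ?_⟩
    exact (Nat.sInf_le (show k ∈ {k | k ≤ T ∧ q k} from ⟨by omega, hk⟩)).not_gt hkτ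

section Paths

variable {T : ℕ} (w : Fin T → Bool)

lemma eastCount_add_northCount (k : ℕ) : eastCount T w k + northCount T w k = min T k := by
  rw [← Fin.card_filter_val_lt, eastCount, northCount, ← card_union_of_disjoint]
  · congr 1; ext i; cases w i <;> simp [← and_or_left]
  · exact disjoint_filter.2 fun i _ h h' => by simp_all

lemma eastCount_mono : Monotone (eastCount T w) := fun _ _ hkl =>
  card_le_card fun _ hi => by
    simp only [mem_filter] at hi ⊢; exact ⟨hi.1, hi.2.1.trans_le hkl, hi.2.2⟩

lemma northCount_mono : Monotone (northCount T w) := fun _ _ hkl =>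
  card_le_card fun _ hi => by
    simp only [mem_filter] at hi ⊢; exact ⟨hi.1, hi.2.1.trans_le hkl, hi.2.2⟩

lemma eastCount_eq_card_inter (k : ℕ) :
    eastCount T w k = #(univ.filter (w · = true) ∩ univ.filter fun i : Fin T => (i : ℕ) < k) := by
  rw [eastCount, filter_and, inter_comm]

lemma eastCount_self : eastCount T w T = #(univ.filter (w · = true)) := by
  simp [eastCount]

lemma exitTime_eq_card_filter_range {Eb Nb : ℕ}
    (hexit : Eb ≤ eastCount T w T ∨ Nb ≤ northCount T w T) :
    exitTime T Eb Nb w = #{k ∈ range (T + 1) | eastCount T w k < Eb ∧ northCount T w k < Nb} := by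
  have hmono : Monotone fun k => Eb ≤ eastCount T w k ∨ Nb ≤ northCount T w k :=
    fun _ _ hkl => Or.imp (le_trans · (eastCount_mono w hkl)) (le_trans · (northCount_mono w hkl))
  rw [exitTime, ← card_filter_range_not_eq_sInf hmono hexit]
  simp only [not_or, not_le]

lemma exitTime_eq_card_visited {Eb Nb : ℕ}
    (hexit : Eb ≤ eastCount T w T ∨ Nb ≤ northCount T w T) :
    exitTime T Eb Nb w = #{p ∈ range Eb ×ˢ range Nb |
      eastCount T w (p.1 + p.2) = p.1 ∧ northCount T w (p.1 + p.2) = p.2} := by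
  rw [exitTime_eq_card_filter_range w hexit]
  refine card_nbij' (fun k => (eastCount T w k, northCount T w k)) (fun p => p.1 + p.2)
    ?_ ?_ ?_ ?_
  · intro k hk
    rw [mem_coe, mem_filter, mem_range] at hk
    have hsum : eastCount T w k + northCount T w k = k := by
      have := eastCount_add_northCount w k; omega
    simpa only [mem_coe, mem_filter, mem_product, mem_range, hsum, and_true] using hk.2
  · rintro ⟨a, b⟩ hp
    rw [mem_coe, mem_filter, mem_product, mem_range, mem_range] at hp
    obtain ⟨⟨ha, hb⟩, he, hn⟩ := hp
    have := eastCount_add_northCount w (a + b)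
    dsimp only at he hn ⊢
    rw [mem_coe, mem_filter, mem_range]
    refine ⟨by omega, by omega, by omega⟩
  · intro k hk
    rw [mem_coe, mem_filter, mem_range] at hk
    have := eastCount_add_northCount w k
    dsimp only
    omega
  · rintro ⟨a, b⟩ hp
    rw [mem_coe, mem_filter] at hp
    exact Prod.ext hp.2.1 hp.2.2

end Paths

lemma card_filter_eastCount_eq {T k M a : ℕ} (hk : k ≤ T) (ha : a ≤ M) :
    #{w : Fin T → Bool | eastCount T w T = M ∧ eastCount T w k = a} =
      k.choose a * (T - k).choose (M - a) := by
  set A : Finset (Fin T) := univ.filter fun i => (i : ℕ) < k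
  have hA : #A = k := by rw [Fin.card_filter_val_lt]; omega
  have hAc : #Aᶜ = T - k := by rw [card_compl, hA, Fintype.card_fin]
  rw [← hAc, ← hA, ← card_filter_card_eq_card_inter_eq A ha, hA]
  refine card_nbij' (fun w => univ.filter (w · = true)) (fun S i => decide (i ∈ S)) ?_ ?_ ?_ ?_
  · intro w hw
    simpa [eastCount_self, eastCount_eq_card_inter] using hw
  · intro S hS
    simpa [eastCount_self, eastCount_eq_card_inter] using hS
  · intro w _
    funext i
    simp
  · intro S _
    ext i
    simp

lemma sum_exitTime_eq {M N Eb Nb : ℕ} (hEb : Eb ≤ M) (hNb : Nb ≤ N) :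
    ∑ w ∈ univ.filter (fun w : Fin (M + N) → Bool => eastCount (M + N) w (M + N) = M),
      exitTime (M + N) Eb Nb w =
      ∑ a ∈ range Eb, ∑ b ∈ range Nb, (a + b).choose a * (M + N - (a + b)).choose (M - a) := by
  calc _ = ∑ w ∈ univ.filter (fun w : Fin (M + N) → Bool => eastCount (M + N) w (M + N) = M),
        ∑ p ∈ range Eb ×ˢ range Nb, if eastCount (M + N) w (p.1 + p.2) = p.1 ∧
          northCount (M + N) w (p.1 + p.2) = p.2 then 1 else 0 := by
        refine sum_congr rfl fun w hw => ?_
        rw [exitTime_eq_card_visited w (Or.inl ((mem_filter.1 hw).2.symm ▸ hEb)), card_filter]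
    _ = ∑ p ∈ range Eb ×ˢ range Nb, #{w : Fin (M + N) → Bool | eastCount (M + N) w (M + N) = M ∧
          eastCount (M + N) w (p.1 + p.2) = p.1 ∧ northCount (M + N) w (p.1 + p.2) = p.2} := by
        rw [sum_comm]
        refine sum_congr rfl fun p _ => ?_
        rw [← card_filter, filter_filter]
    _ = ∑ p ∈ range Eb ×ˢ range Nb,
          (p.1 + p.2).choose p.1 * (M + N - (p.1 + p.2)).choose (M - p.1) := by
        refine sum_congr rfl fun p hp => ?_
        rw [mem_product, mem_range, mem_range] at hp
        rw [← card_filter_eastCount_eq (by omega) (by omega)]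
        refine congrArg card (filter_congr fun w _ => and_congr_right fun _ => ?_)
        have := eastCount_add_northCount w (p.1 + p.2)
        exact ⟨And.left, fun h => ⟨h, by omega⟩⟩
    _ = _ := sum_product _ _ _

lemma choose_mul_choose_mul_choose {M N i j : ℕ} (hi : i ≤ M) (hj : j ≤ N) :
    (M + N).choose M * M.choose i * N.choose j =
      (M + N).choose (i + j) * (i + j).choose i * (M + N - (i + j)).choose (M - i) := by
  obtain ⟨c, rfl⟩ := Nat.exists_eq_add_of_le hi
  obtain ⟨d, rfl⟩ := Nat.exists_eq_add_of_le hj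
  have regroup : i + c + (j + d) = (i + j) + (c + d) := by ring
  rw [regroup, Nat.add_sub_cancel_left, Nat.add_sub_cancel_left]
  apply Nat.cast_injective (R := ℚ)
  push_cast [Nat.cast_add_choose]
  rw [← regroup, Nat.cast_add_choose]
  field_simp

lemma sum_range_eq_sum_Icc_sub {β : Type*} [AddCommMonoid β] (f : ℕ → β) (m M : ℕ) :
    ∑ a ∈ range (M + 1 - m), f a = ∑ i ∈ Icc m M, f (M - i) := by
  rw [← Ico_add_one_right_eq_Icc, sum_Ico_reflect f m le_rfl, Nat.sub_self, range_eq_Ico]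

/-- the sum over all North/East paths from `(0,0)` to `(M,N)` of the
exit time from the rectangle with corners `(0,0)` and `(M−m, N−n)` equals
`C(M+N,M)·(M+N+1)·ℬ(1,1,m,M−m+1,n,N−n+1)`. -/
theorem stmt18 (M N m n : ℕ) (hm1 : 1 ≤ m) (hmM : m ≤ M) (hn1 : 1 ≤ n)
    (hnN : n ≤ N) :
    ∑ w ∈ Finset.univ.filter
        (fun w : Fin (M + N) → Bool => eastCount (M + N) w (M + N) = M),
      (exitTime (M + N) (M - m + 1) (N - n + 1) w : ℝ) =
      ((M + N).choose M : ℝ) * (M + N + 1) *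
        calB 1 1 m ((M : ℝ) - m + 1) n ((N : ℝ) - n + 1) := by
  rw [← Nat.cast_sum, sum_exitTime_eq (by omega) (by omega), calB_natCast hm1 hmM hn1 hnN,
    show M - m + 1 = M + 1 - m by omega, show N - n + 1 = N + 1 - n by omega,
    sum_range_eq_sum_Icc_sub, Nat.cast_sum, mul_sum]
  refine sum_congr rfl fun i hi => ?_
  rw [sum_range_eq_sum_Icc_sub, Nat.cast_sum, mul_sum]
  refine sum_congr rfl fun j hj => ?_
  rw [mem_Icc] at hi hj
  rw [show M - i + (N - j) = M + N - (i + j) by omega,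
    show M + N - (M + N - (i + j)) = i + j by omega, Nat.sub_sub_self hi.2]
  have key : ((M + N).choose M * M.choose i * N.choose j : ℝ) =
      (M + N).choose (i + j) * (i + j).choose i * (M + N - (i + j)).choose (M - i) := by
    exact_mod_cast choose_mul_choose_mul_choose hi.2 hj.2
  have hc : ((M + N).choose (i + j) : ℝ) ≠ 0 := by
    exact_mod_cast (Nat.choose_pos (by omega)).ne'
  rw [← mul_div_assoc, eq_div_iff (mul_ne_zero (by positivity) hc)]
  push_cast
  linear_combination (-(M + N + 1 : ℝ)) * key
end

section
/- For every positive integer n, Σ_{k=n+1}^{2n+1} 2k · C(k−1, n) / 2^k = 2(n+1) − (2n+1) · C(2n, n) / 4^n, where C(·,·) denotes the binomial coefficient. (This is the expected exit time from the square [0,n]² of an unconditioned random walk on the lattice which at each step moves East or North with equal probability; the right side equals 2(n+1) − 2Γ(n+3/2)/(√π · Γ(n+1)).) -/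
/-!
Since `k * C(k-1, n) = (n+1) * C(k, n+1)`, the sum is `(n+1)/2^n * ∑_{j<n+1} C(n+1+j, j)/2^j`.
The partial sums `∑_{j≤N} C(m+j, j)/2^j` equal `2^{-N} ∑_{i≤N} C(m+N+1, i)` by Pascal's rule;
for `N = m` the right side is half of the full row `2m+1`, so `∑_{j≤m} C(m+j, j)/2^j = 2^m`.
Dropping the term `j = m` and using `(m+1) C(2m+2, m+1) = 2(2m+1) C(2m, m)` gives the closed form.
-/

open Finset

theorem Nat.sum_range_choose_add_one (a N : ℕ) :
    ∑ i ∈ range (N + 1), (a + 1).choose i =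
      ∑ i ∈ range (N + 1), a.choose i + ∑ i ∈ range N, a.choose i := by
  rw [sum_range_succ', sum_range_succ' (fun i => a.choose i)]
  simp only [Nat.choose_succ_succ', sum_add_distrib, Nat.choose_zero_right]
  omega

theorem sum_range_choose_add_div_two_pow (m N : ℕ) :
    ∑ j ∈ range (N + 1), ((m + j).choose j : ℚ) / 2 ^ j =
      (∑ i ∈ range (N + 1), (m + N + 1).choose i : ℕ) / 2 ^ N := by
  induction N with
  | zero => simp
  | succ N ih =>
    rw [sum_range_succ (fun j => ((m + j).choose j : ℚ) / 2 ^ j), ih, ← add_assoc m N 1,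
      Nat.sum_range_choose_add_one (m + N + 1) (N + 1), sum_range_succ _ (N + 1)]
    push_cast
    field_simp
    ring

theorem sum_range_choose_add_self_div_two_pow (m : ℕ) :
    ∑ j ∈ range (m + 1), ((m + j).choose j : ℚ) / 2 ^ j = 2 ^ m := by
  rw [sum_range_choose_add_div_two_pow, show m + m + 1 = 2 * m + 1 by omega,
    Nat.sum_range_choose_halfway]
  push_cast
  rw [show (4 : ℚ) = 2 * 2 by norm_num, mul_pow]
  field_simp

theorem sum_range_choose_add_div_two_pow_eq_sub_centralBinom (m : ℕ) :
    ∑ j ∈ range m, ((m + j).choose j : ℚ) / 2 ^ j = 2 ^ m - (m.centralBinom : ℚ) / 2 ^ m := by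
  rw [eq_sub_iff_add_eq, Nat.centralBinom_eq_two_mul_choose, two_mul,
    ← sum_range_succ (fun j => ((m + j).choose j : ℚ) / 2 ^ j),
    sum_range_choose_add_self_div_two_pow]

theorem stmt19_general (n : ℕ) :
    ∑ k ∈ Finset.Icc (n + 1) (2 * n + 1),
        2 * (k : ℚ) * ((k - 1).choose n : ℚ) / 2 ^ k =
      2 * (n + 1 : ℚ) - (2 * n + 1) * ((2 * n).choose n : ℚ) / 4 ^ n := by
  have term (j : ℕ) :
      2 * ((n + 1 + j : ℕ) : ℚ) * ((n + 1 + j - 1).choose n : ℚ) / 2 ^ (n + 1 + j) =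
        (n + 1) / 2 ^ n * (((n + 1 + j).choose j : ℚ) / 2 ^ j) := by
    have h := Nat.add_one_mul_choose_eq (n + j) n
    rw [show n + j + 1 = n + 1 + j by omega, Nat.choose_symm_add (a := n + 1) (b := j)] at h
    qify at h
    rw [show n + 1 + j - 1 = n + j by omega, pow_add, pow_succ]
    push_cast
    field_simp
    linear_combination h
  have central := Nat.succ_mul_centralBinom_succ n
  qify at central
  rw [← Ico_add_one_right_eq_Icc, sum_Ico_eq_sum_range,
    show 2 * n + 1 + 1 - (n + 1) = n + 1 by omega]
  simp only [term]
  rw [← mul_sum, sum_range_choose_add_div_two_pow_eq_sub_centralBinom,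
    ← Nat.centralBinom_eq_two_mul_choose, show (4 : ℚ) = 2 * 2 by norm_num, mul_pow]
  field_simp
  linear_combination (-(2 : ℚ) ^ n) * central

/-- `Σ_{k=n+1}^{2n+1} 2k·C(k−1,n)/2^k = 2(n+1) − (2n+1)·C(2n,n)/4^n`,
the expected exit time from `[0,n]²` of an unconditioned North/East random walk. -/
theorem stmt19 (n : ℕ) (hn : 0 < n) :
    ∑ k ∈ Finset.Icc (n + 1) (2 * n + 1),
        2 * (k : ℚ) * ((k - 1).choose n : ℚ) / 2 ^ k =
      2 * (n + 1 : ℚ) - (2 * n + 1) * ((2 * n).choose n : ℚ) / 4 ^ n :=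
  stmt19_general n
end
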